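/- Let ⟨X, μ⟩ be a generalized topological T1-space such that μ ≠ {∅}. Then ⟨X, μ⟩ is iso-dense if and only if τ[≲_{μ̃[DO(X)]}] = μ̃[DO(X)], if and only if {x ∈ X : {x} is not nowhere dense} ∈ DO(X), if and only if μ̃[DO(X)] = super({x ∈ X : {x} is not nowhere dense}), if and only if μ̃[DO(X)] is an Alexandroff topology on X. -/
import Mathlib


variable {X : Type*}

/-- Quasiorder determined by a family of sets. -/
def relA (𝒜 : Set (Set X)) (x y : X) : Prop := ∀ A ∈ 𝒜, x ∈ A → y ∈ A

/-- Specialization topology of a quasiorder: the family of increasing sets. -/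
def tauR (r : X → X → Prop) : Set (Set X) := {U | ∀ x ∈ U, ∀ y, r x y → y ∈ U}

/-- Generalized topology determined by a family. -/
def muA (𝒜 : Set (Set X)) : Set (Set X) := {U | ∀ x ∈ U, ∃ A ∈ 𝒜, x ∈ A ∧ A ⊆ U}

/-- Extended generalized topology determined by a family. -/
def tmuA (𝒜 : Set (Set X)) : Set (Set X) :=
  muA 𝒜 ∪ {V | ∃ A ∈ 𝒜, A.Nonempty ∧ A ⊆ V}

/-- I(𝒜) = ⋂ (𝒜 \ {∅}). -/
def IA (𝒜 : Set (Set X)) : Set X := ⋂₀ (𝒜 \ {∅})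

/-- I_𝒜(x) = ⋂ {A ∈ 𝒜 : x ∈ A}. -/
def IAx (𝒜 : Set (Set X)) (x : X) : Set X := ⋂₀ {A | A ∈ 𝒜 ∧ x ∈ A}

/-- D is dense w.r.t. the family μ. -/
def GDense (μ : Set (Set X)) (D : Set X) : Prop := ∀ U ∈ μ, U.Nonempty → (U ∩ D).Nonempty

/-- The family of all μ-dense sets. -/
def Dfam (μ : Set (Set X)) : Set (Set X) := {D | GDense μ D}

/-- The set of μ-isolated points. -/
def IsoSet (μ : Set (Set X)) : Set X := {x | {x} ∈ μ}

/-- super(S): all supersets of S, together with ∅. -/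
def superS (S : Set X) : Set (Set X) := {U | S ⊆ U} ∪ {∅}

/-- μ is a generalized topology. -/
def IsGT (μ : Set (Set X)) : Prop := ∅ ∈ μ ∧ ∀ 𝒰 ⊆ μ, ⋃₀ 𝒰 ∈ μ

/-- τ is a topology on X (as a family of sets). -/
def IsTopFam (τ : Set (Set X)) : Prop :=
  ∅ ∈ τ ∧ Set.univ ∈ τ ∧ (∀ 𝒰 ⊆ τ, ⋃₀ 𝒰 ∈ τ) ∧ ∀ U ∈ τ, ∀ V ∈ τ, U ∩ V ∈ τ

/-- τ is an Alexandroff topology on X. -/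
def IsAlexFam (τ : Set (Set X)) : Prop :=
  IsTopFam τ ∧ ∀ 𝒰 ⊆ τ, 𝒰.Nonempty → ⋂₀ 𝒰 ∈ τ

/-- The family of dense open sets. -/
def DOfam (μ : Set (Set X)) : Set (Set X) := μ ∩ Dfam μ

/-- Closure w.r.t. a generalized topology. -/
def gcl (μ : Set (Set X)) (E : Set X) : Set X := ⋂₀ {C | E ⊆ C ∧ Cᶜ ∈ μ}

/-- Interior w.r.t. a generalized topology. -/
def gint (μ : Set (Set X)) (E : Set X) : Set X := ⋃₀ {U | U ∈ μ ∧ U ⊆ E}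

/-- E is nowhere dense w.r.t. μ. -/
def NwD (μ : Set (Set X)) (E : Set X) : Prop := gint μ (gcl μ E) = ∅

/-- μ is indiscrete. -/
def Indiscrete (μ : Set (Set X)) : Prop := μ ⊆ {∅, Set.univ}


section Aux

variable {μ : Set (Set X)} {D : Set X}

lemma iso_subset_dense (hD : GDense μ D) : IsoSet μ ⊆ D := by
  intro x hx
  obtain ⟨y, hy⟩ := hD {x} hx ⟨x, rfl⟩
  have : y = x := hy.1
  subst this; exact hy.2

lemma exists_nonempty_open (hμ : IsGT μ) (hne : μ ≠ {∅}) : ∃ U ∈ μ, U.Nonempty := by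
  by_contra h
  push_neg at h
  apply hne
  ext U
  constructor
  · intro hU
    exact h U hU
  · intro hU
    have : U = ∅ := hU
    subst this; exact hμ.1

lemma sUnion_mem_DO (hμ : IsGT μ) : ⋃₀ μ ∈ DOfam μ := by
  refine ⟨hμ.2 μ subset_rfl, ?_⟩
  intro U hU ⟨x, hx⟩
  exact ⟨x, hx, U, hU, hx⟩

lemma DO_nonempty (hμ : IsGT μ) (hne : μ ≠ {∅}) {A : Set X} (hA : A ∈ DOfam μ) :
    A.Nonempty := by
  obtain ⟨U, hU, hUne⟩ := exists_nonempty_open hμ hne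
  obtain ⟨y, hy⟩ := hA.2 U hU hUne
  exact ⟨y, hy.2⟩

lemma mem_tmuA_nonempty {W : Set X} (hW : W ∈ tmuA (DOfam μ)) (hWne : W.Nonempty) :
    ∃ A ∈ DOfam μ, A ⊆ W := by
  rcases hW with hW | ⟨A, hA, _, hAW⟩
  · obtain ⟨x, hx⟩ := hWne
    obtain ⟨A, hA, _, hAW⟩ := hW x hx
    exact ⟨A, hA, hAW⟩
  · exact ⟨A, hA, hAW⟩

lemma iso_open (hμ : IsGT μ) : IsoSet μ ∈ μ := by
  have h : IsoSet μ = ⋃₀ {A : Set X | ∃ x ∈ IsoSet μ, A = {x}} := by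
    ext y
    constructor
    · intro hy; exact ⟨{y}, ⟨y, hy, rfl⟩, rfl⟩
    · rintro ⟨A, ⟨x, hx, rfl⟩, hy⟩
      have : y = x := hy
      subst this; exact hx
  rw [h]
  apply hμ.2
  rintro A ⟨x, hx, rfl⟩
  exact hx

lemma not_nwd_eq_iso (hT1 : ∀ x : X, ({x} : Set X)ᶜ ∈ μ) :
    {x : X | ¬ NwD μ {x}} = IsoSet μ := by
  ext x
  have hcl : gcl μ {x} = {x} := by
    apply subset_antisymm
    · exact Set.sInter_subset_of_mem ⟨subset_rfl, hT1 x⟩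
    · intro y hy C hC
      have : y = x := hy
      subst this
      exact hC.1 rfl
  simp only [Set.mem_setOf_eq, NwD, hcl, IsoSet]
  constructor
  · intro h
    by_contra hx
    apply h
    ext y
    simp only [gint, Set.mem_sUnion, Set.mem_setOf_eq]
    constructor
    · rintro ⟨U, ⟨hU, hUx⟩, hyU⟩
      rcases Set.eq_empty_or_nonempty U with rfl | hUne
      · exact hyU
      · exfalso
        apply hx
        have : U = {x} := (Set.Nonempty.subset_singleton_iff hUne).mp hUx
        rwa [this] at hU
    · intro h; exact h.elim
  · intro h hempty
    have : x ∈ gint μ {x} := ⟨{x}, ⟨h, subset_rfl⟩, rfl⟩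
    rw [hempty] at this
    exact this

lemma tmuA_eq_superS (hμ : IsGT μ) (hne : μ ≠ {∅}) (h : GDense μ (IsoSet μ)) :
    tmuA (DOfam μ) = superS (IsoSet μ) := by
  have hIsoDO : IsoSet μ ∈ DOfam μ := ⟨iso_open hμ, h⟩
  have hIsoNe : (IsoSet μ).Nonempty := DO_nonempty hμ hne hIsoDO
  ext W
  constructor
  · intro hW
    rcases Set.eq_empty_or_nonempty W with rfl | hWne
    · exact Or.inr rfl
    · obtain ⟨A, hA, hAW⟩ := mem_tmuA_nonempty hW hWne
      exact Or.inl ((iso_subset_dense hA.2).trans hAW)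
  · rintro (hW | hW)
    · exact Or.inr ⟨IsoSet μ, hIsoDO, hIsoNe, hW⟩
    · have : W = ∅ := hW
      subst this
      exact Or.inl (fun x hx => absurd hx (Set.notMem_empty x))

lemma alex_imp_dense (hμ : IsGT μ) (hT1 : ∀ x : X, ({x} : Set X)ᶜ ∈ μ)
    (hne : μ ≠ {∅}) (hA : IsAlexFam (tmuA (DOfam μ))) : GDense μ (IsoSet μ) := by
  intro U hU hUne
  by_contra hcon
  rw [Set.not_nonempty_iff_eq_empty] at hcon
  -- every point of U is non-isolated, hence its complement is dense open
  have hnoniso : ∀ x ∈ U, x ∉ IsoSet μ := by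
    intro x hx hxI
    exact absurd (Set.mem_inter hx hxI) (by rw [hcon]; exact Set.notMem_empty x)
  have hcompl : ∀ x : X, x ∉ IsoSet μ → ({x}ᶜ : Set X) ∈ tmuA (DOfam μ) := by
    intro x hx
    have hdo : ({x}ᶜ : Set X) ∈ DOfam μ := by
      refine ⟨hT1 x, ?_⟩
      intro V hV hVne
      by_contra hc
      rw [Set.not_nonempty_iff_eq_empty] at hc
      have hVx : V ⊆ {x} := by
        intro v hv
        by_contra hvx
        have : v ∈ V ∩ {x}ᶜ := ⟨hv, hvx⟩
        rw [hc] at this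
        exact this
      have hVeq : V = {x} := (Set.Nonempty.subset_singleton_iff hVne).mp hVx
      apply hx
      show ({x} : Set X) ∈ μ
      rw [← hVeq]; exact hV
    have hne' : ({x}ᶜ : Set X).Nonempty := DO_nonempty hμ hne hdo
    exact Or.inr ⟨{x}ᶜ, hdo, hne', subset_rfl⟩
  -- no dense open set can avoid U
  have hno : ∀ W : Set X, W ∈ tmuA (DOfam μ) → W.Nonempty → (W ∩ U).Nonempty := by
    intro W hW hWne
    obtain ⟨A, hA, hAW⟩ := mem_tmuA_nonempty hW hWne
    obtain ⟨y, hy⟩ := hA.2 U hU hUne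
    exact ⟨y, hAW hy.2, hy.1⟩
  rcases Set.eq_empty_or_nonempty (Uᶜ) with hUc | hUcne
  · -- U = univ, so IsoSet μ = ∅; intersect complements of all points but one
    obtain ⟨x₀, hx₀⟩ := hUne
    have hx₀n : x₀ ∉ IsoSet μ := hnoniso x₀ hx₀
    rcases Set.eq_empty_or_nonempty ({x₀}ᶜ : Set X) with hsing | ⟨y, hy⟩
    · -- X = {x₀}, then U = {x₀} ∈ μ so x₀ isolated: contradiction
      apply hx₀n
      have hUx : U ⊆ {x₀} := by
        intro u hu
        by_contra hux
        have : u ∈ ({x₀}ᶜ : Set X) := hux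
        rw [hsing] at this
        exact this
      have hUeq : U = {x₀} := (Set.Nonempty.subset_singleton_iff ⟨x₀, hx₀⟩).mp hUx
      show ({x₀} : Set X) ∈ μ
      rw [← hUeq]; exact hU
    · -- there is y ≠ x₀
      set 𝒰 : Set (Set X) := (fun z => ({z}ᶜ : Set X)) '' ({x₀}ᶜ) with h𝒰
      have hsub : 𝒰 ⊆ tmuA (DOfam μ) := by
        rintro A ⟨z, hz, rfl⟩
        apply hcompl
        intro hzI
        have : z ∈ U := by
          by_contra hzU
          have : z ∈ Uᶜ := hzU
          rw [hUc] at this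
          exact this
        exact hnoniso z this hzI
      have h𝒰ne : 𝒰.Nonempty := ⟨{y}ᶜ, y, hy, rfl⟩
      have hInter : ⋂₀ 𝒰 = {x₀} := by
        ext w
        simp only [h𝒰, Set.sInter_image, Set.mem_iInter, Set.mem_compl_iff,
          Set.mem_singleton_iff]
        constructor
        · intro h
          by_contra hw
          exact h w hw rfl
        · rintro rfl z hz hzw
          exact hz hzw.symm
      have hsing₀ : ({x₀} : Set X) ∈ tmuA (DOfam μ) := by
        rw [← hInter]; exact hA.2 𝒰 hsub h𝒰ne
      obtain ⟨A, hADO, hAs⟩ := mem_tmuA_nonempty hsing₀ ⟨x₀, rfl⟩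
      have hAne : A.Nonempty := DO_nonempty hμ hne hADO
      have hAeq : A = {x₀} := (Set.Nonempty.subset_singleton_iff hAne).mp hAs
      apply hx₀n
      show ({x₀} : Set X) ∈ μ
      rw [← hAeq]
      exact hADO.1
  · -- Uᶜ nonempty: Uᶜ = ⋂ of complements of points of U, so Uᶜ ∈ tmuA, contradiction
    set 𝒰 : Set (Set X) := (fun z => ({z}ᶜ : Set X)) '' U with h𝒰
    have hsub : 𝒰 ⊆ tmuA (DOfam μ) := by
      rintro A ⟨z, hz, rfl⟩
      exact hcompl z (hnoniso z hz)
    obtain ⟨x₀, hx₀⟩ := hUne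
    have h𝒰ne : 𝒰.Nonempty := ⟨{x₀}ᶜ, x₀, hx₀, rfl⟩
    have hInter : ⋂₀ 𝒰 = Uᶜ := by
      ext w
      simp only [h𝒰, Set.sInter_image, Set.mem_iInter, Set.mem_compl_iff,
        Set.mem_singleton_iff]
      constructor
      · intro h hw
        exact h w hw rfl
      · rintro hw z hz rfl
        exact hw hz
    have hUcmem : Uᶜ ∈ tmuA (DOfam μ) := by
      rw [← hInter]; exact hA.2 𝒰 hsub h𝒰ne
    obtain ⟨w, hw⟩ := hno _ hUcmem hUcne
    exact hw.1 hw.2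

lemma superS_imp_dense (hμ : IsGT μ) (hT1 : ∀ x : X, ({x} : Set X)ᶜ ∈ μ)
    (hne : μ ≠ {∅}) (h : tmuA (DOfam μ) = superS (IsoSet μ)) : GDense μ (IsoSet μ) := by
  intro U hU hUne
  by_contra hcon
  rw [Set.not_nonempty_iff_eq_empty] at hcon
  have hIsoUc : IsoSet μ ⊆ Uᶜ := by
    intro x hx hxU
    exact absurd (Set.mem_inter hxU hx) (by rw [hcon]; exact Set.notMem_empty x)
  have hUcmem : Uᶜ ∈ tmuA (DOfam μ) := by rw [h]; exact Or.inl hIsoUc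
  rcases Set.eq_empty_or_nonempty (Uᶜ) with hUc | hUcne
  · -- Iso = ∅, so superS Iso contains all sets, in particular {x₀}
    have hIso : IsoSet μ = ∅ := Set.eq_empty_of_subset_empty (hUc ▸ hIsoUc)
    obtain ⟨x₀, hx₀⟩ := hUne
    have hsing₀ : ({x₀} : Set X) ∈ tmuA (DOfam μ) := by
      rw [h]; exact Or.inl (by rw [hIso]; exact Set.empty_subset _)
    obtain ⟨A, hADO, hAs⟩ := mem_tmuA_nonempty hsing₀ ⟨x₀, rfl⟩
    have hAne : A.Nonempty := DO_nonempty hμ hne hADO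
    have hAeq : A = {x₀} := (Set.Nonempty.subset_singleton_iff hAne).mp hAs
    have : x₀ ∈ IsoSet μ := by
      show ({x₀} : Set X) ∈ μ
      rw [← hAeq]; exact hADO.1
    rw [hIso] at this; exact this
  · obtain ⟨A, hADO, hAs⟩ := mem_tmuA_nonempty hUcmem hUcne
    obtain ⟨y, hy⟩ := hADO.2 U hU hUne
    exact hAs hy.2 hy.1

lemma relA_superS (S : Set X) (x y : X) : relA (superS S) x y ↔ y ∈ S ∪ {x} := by
  constructor
  · intro h
    exact h (S ∪ {x}) (Or.inl Set.subset_union_left) (Or.inr rfl)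
  · rintro hy A (hA | hA) hx
    · rcases hy with hy | hy
      · exact hA hy
      · have : y = x := hy
        subst this; exact hx
    · have : A = ∅ := hA
      subst this; exact absurd hx (Set.notMem_empty x)

lemma tauR_relA_superS (S : Set X) : tauR (relA (superS S)) = superS S := by
  ext U
  constructor
  · intro hU
    rcases Set.eq_empty_or_nonempty U with rfl | ⟨x, hx⟩
    · exact Or.inr rfl
    · refine Or.inl (fun s hs => ?_)
      exact hU x hx s ((relA_superS S x s).mpr (Or.inl hs))
  · rintro (hU | hU)
    · intro x hx y hr
      rcases (relA_superS S x y).mp hr with hy | hy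
      · exact hU hy
      · have : y = x := hy
        subst this; exact hx
    · have : U = ∅ := hU
      subst this
      intro x hx
      exact absurd hx (Set.notMem_empty x)

lemma superS_alex (S : Set X) : IsAlexFam (superS S) := by
  constructor
  · refine ⟨Or.inr rfl, Or.inl (Set.subset_univ S), ?_, ?_⟩
    · intro 𝒰 h𝒰
      by_cases hex : ∃ U ∈ 𝒰, S ⊆ U
      · obtain ⟨U, hU, hSU⟩ := hex
        exact Or.inl (hSU.trans (Set.subset_sUnion_of_mem hU))
      · push_neg at hex
        refine Or.inr ?_
        have : ⋃₀ 𝒰 = ∅ := by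
          rw [Set.sUnion_eq_empty]
          intro U hU
          rcases h𝒰 hU with h | h
          · exact absurd h (hex U hU)
          · exact h
        exact this
    · rintro U (hU | hU) V (hV | hV)
      · exact Or.inl (Set.subset_inter hU hV)
      · have : V = ∅ := hV
        subst this; exact Or.inr (Set.inter_empty U)
      · have : U = ∅ := hU
        subst this; exact Or.inr (Set.empty_inter V)
      · have : U = ∅ := hU
        subst this; exact Or.inr (Set.empty_inter V)
  · intro 𝒰 h𝒰 h𝒰ne
    by_cases hex : ∃ U ∈ 𝒰, U = ∅
    · obtain ⟨U, hU, rfl⟩ := hex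
      refine Or.inr (Set.eq_empty_of_subset_empty (Set.sInter_subset_of_mem hU))
    · push_neg at hex
      refine Or.inl (Set.subset_sInter fun U hU => ?_)
      rcases h𝒰 hU with h | h
      · exact h
      · obtain ⟨a, ha⟩ := hex U hU
        have : U = ∅ := h
        rw [this] at ha
        exact ha.elim

lemma tauR_alex (r : X → X → Prop) : IsAlexFam (tauR r) := by
  constructor
  · refine ⟨?_, ?_, ?_, ?_⟩
    · intro x hx; exact absurd hx (Set.notMem_empty x)
    · intro x _ y _; exact Set.mem_univ y
    · intro 𝒰 h𝒰 x hx y hr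
      obtain ⟨U, hU, hxU⟩ := hx
      exact ⟨U, hU, h𝒰 hU x hxU y hr⟩
    · intro U hU V hV x hx y hr
      exact ⟨hU x hx.1 y hr, hV x hx.2 y hr⟩
  · intro 𝒰 h𝒰 _ x hx y hr
    intro U hU
    exact h𝒰 hU x (hx U hU) y hr

end Aux

theorem stmt14 (μ : Set (Set X)) (hμ : IsGT μ)
    (hT1 : ∀ x : X, ({x} : Set X)ᶜ ∈ μ) (hne : μ ≠ {∅}) :
    (GDense μ (IsoSet μ) ↔ tauR (relA (tmuA (DOfam μ))) = tmuA (DOfam μ)) ∧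
    (GDense μ (IsoSet μ) ↔ {x : X | ¬ NwD μ {x}} ∈ DOfam μ) ∧
    (GDense μ (IsoSet μ) ↔ tmuA (DOfam μ) = superS {x : X | ¬ NwD μ {x}}) ∧
    (GDense μ (IsoSet μ) ↔ IsAlexFam (tmuA (DOfam μ))) := by
  have hS : {x : X | ¬ NwD μ {x}} = IsoSet μ := not_nwd_eq_iso hT1
  rw [hS]
  have main : GDense μ (IsoSet μ) ↔ IsAlexFam (tmuA (DOfam μ)) := by
    constructor
    · intro h
      rw [tmuA_eq_superS hμ hne h]
      exact superS_alex _
    · exact alex_imp_dense hμ hT1 hne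
  refine ⟨?_, ?_, ?_, main⟩
  · constructor
    · intro h
      rw [tmuA_eq_superS hμ hne h]
      exact tauR_relA_superS _
    · intro h
      apply main.mpr
      rw [← h]
      exact tauR_alex _
  · constructor
    · intro h
      exact ⟨iso_open hμ, h⟩
    · intro h
      exact h.2
  · constructor
    · exact tmuA_eq_superS hμ hne
    · exact superS_imp_dense hμ hT1 hne
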